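/- arXiv:2510.12512 — 6 statements merged into one kernel-verified Lean document; each statement's English description precedes it below -/
import Mathlib

section
/- Let 0 < μ < L be reals and set κ = L/μ. Let n ≥ 1, let m ∈ ℝ[z] be a monic polynomial of degree n all of whose complex roots have modulus exactly 1, and let d ∈ ℝ[z] be a polynomial with deg d < n. Let ρ > 0 and suppose that for every λ ∈ [μ, L], every complex root of the polynomial m(z) − λ·d(z) has modulus at most ρ. Then ρ^n ≥ (κ − 1)/(κ + 1), i.e., ρ ≥ ((κ − 1)/(κ + 1))^{1/n}. -/
open Polynomial

/-!
The constant coefficient of a monic polynomial is, up to sign, the product of its complex roots.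
Hence `|m(0)| = 1`, while `|m(0) - λ d(0)| ≤ ρⁿ` at both endpoints `λ = μ` and `λ = L`.
Eliminating `b = d(0)` through `L (a - μ b) - μ (a - L b) = (L - μ) a`, with `a = m(0)`, gives
`L - μ ≤ (L + μ) ρⁿ`, which is the bound `ρⁿ ≥ (κ - 1) / (κ + 1)`.
-/

namespace Polynomial

section Splits

variable {K : Type*} [NormedField K] {p : K[X]}

theorem Splits.norm_coeff_zero_eq_prod_norm_roots (hsplit : p.Splits) (hp : p.Monic) :
    ‖p.coeff 0‖ = (p.roots.map (‖·‖)).prod := by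
  rw [hsplit.coeff_zero_eq_prod_roots_of_monic hp, norm_mul, norm_pow, norm_neg, norm_one,
    one_pow, one_mul, ← normHom_apply, map_multiset_prod]
  rfl

theorem Splits.norm_coeff_zero_le_pow (hsplit : p.Splits) (hp : p.Monic) {ρ : ℝ}
    (hroots : ∀ z, p.IsRoot z → ‖z‖ ≤ ρ) : ‖p.coeff 0‖ ≤ ρ ^ p.natDegree := by
  rw [hsplit.norm_coeff_zero_eq_prod_norm_roots hp, hsplit.natDegree_eq_card_roots,
    ← Multiset.prod_replicate, ← Multiset.map_const']
  exact Multiset.prod_map_le_prod_map₀ _ _ (fun z _ ↦ norm_nonneg z)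
    fun z hz ↦ hroots z (isRoot_of_mem_roots hz)

theorem Splits.norm_coeff_zero_eq_one (hsplit : p.Splits) (hp : p.Monic)
    (hroots : ∀ z, p.IsRoot z → ‖z‖ = 1) : ‖p.coeff 0‖ = 1 := by
  rw [hsplit.norm_coeff_zero_eq_prod_norm_roots hp]
  refine Multiset.prod_eq_one fun x hx ↦ ?_
  obtain ⟨z, hz, rfl⟩ := Multiset.mem_map.mp hx
  exact hroots z (isRoot_of_mem_roots hz)

end Splits

section AlgClosed

variable {K E : Type*} [NormedField K] [NormedField E] [NormedAlgebra K E] [IsAlgClosed E]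
  {p : K[X]}

theorem Monic.norm_coeff_zero_le_pow_of_norm_roots_map_le (hp : p.Monic) {ρ : ℝ}
    (hroots : ∀ z : E, (p.map (algebraMap K E)).IsRoot z → ‖z‖ ≤ ρ) :
    ‖p.coeff 0‖ ≤ ρ ^ p.natDegree := by
  have h := (IsAlgClosed.splits (p.map (algebraMap K E))).norm_coeff_zero_le_pow (hp.map _) hroots
  rwa [coeff_map, norm_algebraMap', hp.natDegree_map] at h

theorem Monic.norm_coeff_zero_eq_one_of_norm_roots_map_eq_one (hp : p.Monic)
    (hroots : ∀ z : E, (p.map (algebraMap K E)).IsRoot z → ‖z‖ = 1) : ‖p.coeff 0‖ = 1 := by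
  have h := (IsAlgClosed.splits (p.map (algebraMap K E))).norm_coeff_zero_eq_one (hp.map _) hroots
  rwa [coeff_map, norm_algebraMap'] at h

end AlgClosed

variable {R : Type*} [Ring R] {m d : R[X]}

theorem degree_C_mul_lt_of_degree_lt (hd : d.degree < m.degree) (c : R) :
    (C c * d).degree < m.degree :=
  smul_eq_C_mul c ▸ (degree_smul_le c d).trans_lt hd

theorem Monic.sub_C_mul_of_degree_lt (hm : m.Monic) (hd : d.degree < m.degree) (c : R) :
    (m - C c * d).Monic :=
  hm.sub_of_left (degree_C_mul_lt_of_degree_lt hd c)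

theorem natDegree_sub_C_mul_of_degree_lt (hd : d.degree < m.degree) (c : R) :
    (m - C c * d).natDegree = m.natDegree :=
  natDegree_eq_natDegree (degree_sub_eq_left_of_degree_lt (degree_C_mul_lt_of_degree_lt hd c))

end Polynomial

theorem norm_sub_mul_norm_le {𝕜 : Type*} [NormedField 𝕜] (a b s t : 𝕜) :
    ‖t - s‖ * ‖a‖ ≤ ‖t‖ * ‖a - s * b‖ + ‖s‖ * ‖a - t * b‖ := by
  calc ‖t - s‖ * ‖a‖ = ‖t * (a - s * b) - s * (a - t * b)‖ := by rw [← norm_mul]; ring_nf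
    _ ≤ ‖t‖ * ‖a - s * b‖ + ‖s‖ * ‖a - t * b‖ := by
      rw [← norm_mul, ← norm_mul]; exact norm_sub_le _ _

/-- **Theorem 1 (fundamental lower bound on the worst-case convergence rate).**
Let `0 < μ < L`, `κ = L/μ`. Let `m` be a monic real polynomial of degree `n ≥ 1`
all of whose complex roots have modulus exactly `1`, and `d` a real polynomial
with `deg d < n`. If `ρ > 0` is such that for every `λ ∈ [μ, L]` every complex
root of `m - λ·d` has modulus at most `ρ`, then `ρ^n ≥ (κ-1)/(κ+1)`, i.e.
`ρ ≥ ((κ-1)/(κ+1))^(1/n)`. -/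
theorem worst_case_rate_lower_bound
    (μ L : ℝ) (hμ : 0 < μ) (hμL : μ < L)
    (n : ℕ) (hn : 1 ≤ n)
    (m : Polynomial ℝ) (hm : m.Monic) (hmdeg : m.natDegree = n)
    (hmroots : ∀ z : ℂ, (m.map (algebraMap ℝ ℂ)).IsRoot z → ‖z‖ = 1)
    (d : Polynomial ℝ) (hd : d.degree < (n : WithBot ℕ))
    (ρ : ℝ) (hρ : 0 < ρ)
    (hstab : ∀ lam ∈ Set.Icc μ L, ∀ z : ℂ,
      ((m - C lam * d).map (algebraMap ℝ ℂ)).IsRoot z → ‖z‖ ≤ ρ) :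
    (L / μ - 1) / (L / μ + 1) ≤ ρ ^ n ∧
      ((L / μ - 1) / (L / μ + 1)) ^ ((1 : ℝ) / n) ≤ ρ := by
  have hdm : d.degree < m.degree := by rwa [degree_eq_natDegree hm.ne_zero, hmdeg]
  have hconst : ∀ lam ∈ Set.Icc μ L, |m.coeff 0 - lam * d.coeff 0| ≤ ρ ^ n := fun lam hlam ↦ by
    simpa [← hmdeg, natDegree_sub_C_mul_of_degree_lt hdm] using
      (hm.sub_C_mul_of_degree_lt hdm lam).norm_coeff_zero_le_pow_of_norm_roots_map_le
        (hstab lam hlam)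
  have hm0 : |m.coeff 0| = 1 := hm.norm_coeff_zero_eq_one_of_norm_roots_map_eq_one hmroots
  have hrate : L - μ ≤ (L + μ) * ρ ^ n := by
    have h := norm_sub_mul_norm_le (m.coeff 0) (d.coeff 0) μ L
    simp only [Real.norm_eq_abs, hm0, abs_of_pos hμ, abs_of_pos (hμ.trans hμL),
      abs_of_pos (sub_pos.mpr hμL), mul_one] at h
    nlinarith [hconst μ ⟨le_rfl, hμL.le⟩, hconst L ⟨hμL.le, le_rfl⟩]
  have hκ : (L / μ - 1) / (L / μ + 1) = (L - μ) / (L + μ) := by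
    field_simp
  have hbound : (L / μ - 1) / (L / μ + 1) ≤ ρ ^ n := by
    rw [hκ, div_le_iff₀ (by linarith)]
    linarith
  refine ⟨hbound, ?_⟩
  rw [one_div, Real.rpow_inv_le_iff_of_pos (hκ ▸ div_nonneg (by linarith) (by linarith)) hρ.le
    (by exact_mod_cast hn), Real.rpow_natCast]
  exact hbound
end

section
/- Let 0 < μ < L be reals and set κ = L/μ. Let n ≥ 1, let m ∈ ℝ[z] be a monic polynomial of degree n (no condition on its roots), and let d ∈ ℝ[z] be a polynomial with deg d < n. Let ρ > 0 and suppose that for every λ ∈ [μ, L], every complex root of m(z) − λ·d(z) has modulus at most ρ. Then for every k ∈ {1, …, n}, the coefficient m_{n−k} of z^{n−k} in m satisfies |m_{n−k}| · (κ − 1)/(κ + 1) ≤ binom(n, k) · ρ^k. -/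
/-!
For every `λ ∈ [μ, L]` the polynomial `m - λ d` is monic of degree `n` with all complex roots in
the disc of radius `ρ`, so by Vieta its coefficient `m_{n-k} - λ d_{n-k}` is bounded by
`binom(n, k) ρ^k`. Sampling `λ = μ` and `λ = L` and eliminating `d_{n-k}` bounds `m_{n-k}`.
-/

open Polynomial

theorem Polynomial.Monic.sub_C_mul_of_degree_lt_s1 {R : Type*} [Ring R] {m d : R[X]} (hm : m.Monic)
    (hd : d.degree < m.degree) (c : R) :
    (m - C c * d).Monic ∧ (m - C c * d).natDegree = m.natDegree := by
  have hlt : (C c * d).degree < m.degree := by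
    rw [← smul_eq_C_mul]
    exact (degree_smul_le c d).trans_lt hd
  exact ⟨hm.sub_of_left hlt, natDegree_eq_natDegree (degree_sub_eq_left_of_degree_lt hlt)⟩

theorem Polynomial.Monic.abs_coeff_natDegree_sub_le {p : ℝ[X]} (hp : p.Monic) {ρ : ℝ}
    (hroots : ∀ z : ℂ, (p.map (algebraMap ℝ ℂ)).IsRoot z → ‖z‖ ≤ ρ) {k : ℕ}
    (hk : k ≤ p.natDegree) :
    |p.coeff (p.natDegree - k)| ≤ (p.natDegree.choose k : ℝ) * ρ ^ k := by
  have h := coeff_le_of_roots_le (p.natDegree - k) hp (IsAlgClosed.splits _)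
    fun z hz => hroots z (isRoot_of_mem_roots hz)
  rwa [coeff_map, norm_algebraMap', Real.norm_eq_abs, Nat.sub_sub_self hk,
    Nat.choose_symm hk, mul_comm] at h

theorem abs_mul_ratio_le_of_abs_sub_mul_le {a b μ L B : ℝ} (hμ : 0 < μ) (hμL : μ ≤ L)
    (hbμ : |a - μ * b| ≤ B) (hbL : |a - L * b| ≤ B) :
    |a| * ((L / μ - 1) / (L / μ + 1)) ≤ B := by
  have hLμ : 0 < L + μ := by linarith
  have hratio : (L / μ - 1) / (L / μ + 1) = (L - μ) / (L + μ) := by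
    field_simp
  -- `a` is recovered from the two sampled values: `(L - μ) a = L (a - μ b) - μ (a - L b)`.
  have hcomb : |a| * (L - μ) ≤ (L + μ) * B :=
    calc |a| * (L - μ) = |L * (a - μ * b) - μ * (a - L * b)| := by
          rw [← abs_of_nonneg (sub_nonneg.2 hμL), ← abs_mul]
          congr 1
          ring
      _ ≤ L * |a - μ * b| + μ * |a - L * b| := by
          refine (abs_sub _ _).trans_eq ?_
          rw [abs_mul, abs_mul, abs_of_pos (hμ.trans_le hμL), abs_of_pos hμ]
      _ ≤ (L + μ) * B := by nlinarith
  rw [hratio, mul_div_assoc', div_le_iff₀ hLμ]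
  linarith

theorem model_coefficient_bound_general
    (μ L : ℝ) (hμ : 0 < μ) (hμL : μ < L)
    (n : ℕ)
    (m : Polynomial ℝ) (hm : m.Monic) (hmdeg : m.natDegree = n)
    (d : Polynomial ℝ) (hd : d.degree < (n : WithBot ℕ))
    (ρ : ℝ)
    (hstab : ∀ lam ∈ Set.Icc μ L, ∀ z : ℂ,
      ((m - C lam * d).map (algebraMap ℝ ℂ)).IsRoot z → ‖z‖ ≤ ρ) :
    ∀ k, 1 ≤ k → k ≤ n →
      |m.coeff (n - k)| * ((L / μ - 1) / (L / μ + 1)) ≤ (n.choose k : ℝ) * ρ ^ k := by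
  intro k _ hkn
  have hdm : d.degree < m.degree := by rwa [degree_eq_natDegree hm.ne_zero, hmdeg]
  have hsample : ∀ lam ∈ Set.Icc μ L,
      |m.coeff (n - k) - lam * d.coeff (n - k)| ≤ (n.choose k : ℝ) * ρ ^ k := by
    intro lam hlam
    obtain ⟨hmon, hdeg⟩ := hm.sub_C_mul_of_degree_lt_s1 hdm lam
    rw [hmdeg] at hdeg
    have h := hmon.abs_coeff_natDegree_sub_le (hstab lam hlam) (hdeg ▸ hkn)
    rwa [hdeg, coeff_sub, coeff_C_mul] at h
  exact abs_mul_ratio_le_of_abs_sub_mul_le hμ hμL.le (hsample μ ⟨le_rfl, hμL.le⟩)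
    (hsample L ⟨hμL.le, le_rfl⟩)

/-- **Generalized coefficient bound (eq. bound-general).**
Let `0 < μ < L`, `κ = L/μ`. Let `m` be a monic real polynomial of degree `n ≥ 1`
(no condition on its roots) and `d` a real polynomial with `deg d < n`. If every
complex root of `m - λ·d` has modulus at most `ρ` for all `λ ∈ [μ, L]`, then for
every `k ∈ {1, …, n}` the coefficient of `z^(n-k)` in `m` satisfies
`|m_{n-k}| · (κ-1)/(κ+1) ≤ binom(n,k) · ρ^k`. -/
theorem model_coefficient_bound
    (μ L : ℝ) (hμ : 0 < μ) (hμL : μ < L)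
    (n : ℕ) (hn : 1 ≤ n)
    (m : Polynomial ℝ) (hm : m.Monic) (hmdeg : m.natDegree = n)
    (d : Polynomial ℝ) (hd : d.degree < (n : WithBot ℕ))
    (ρ : ℝ) (hρ : 0 < ρ)
    (hstab : ∀ lam ∈ Set.Icc μ L, ∀ z : ℂ,
      ((m - C lam * d).map (algebraMap ℝ ℂ)).IsRoot z → ‖z‖ ≤ ρ) :
    ∀ k, 1 ≤ k → k ≤ n →
      |m.coeff (n - k)| * ((L / μ - 1) / (L / μ + 1)) ≤ (n.choose k : ℝ) * ρ ^ k :=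
  model_coefficient_bound_general μ L hμ hμL n m hm hmdeg d hd ρ hstab
end

section
/- Let 0 < μ < L be reals and let λ ∈ [μ, L]. Let n ≥ 1, let m ∈ ℝ[z] be a monic polynomial of degree n with coefficients m_0, …, m_{n−1} (and m_n = 1), and let d ∈ ℝ[z] be a polynomial of degree < n with coefficients d_0, …, d_{n−1}. Let b, x : ℕ → ℝ be sequences such that for all k ∈ ℕ: (i) b_{k+n} + Σ_{i=0}^{n−1} m_i b_{k+i} = 0, and (ii) x_{k+n} + Σ_{i=0}^{n−1} m_i x_{k+i} = Σ_{i=0}^{n−1} d_i (λ x_{k+i} + b_{k+i}). Let ρ ∈ (0, 1) be such that every complex root of m(z) − λ·d(z) has modulus at most ρ. Then for every real r > ρ, the sequence (x_k + b_k/λ)/r^k converges to 0; in particular x_k − x*_k → 0, where x*_k = −b_k/λ is the minimizer of the scalar objective f_k(x) = ½λx² + b_k x. -/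
/-!
The tracking error `y = x + b / λ` satisfies the linear recurrence with characteristic polynomial
`m - λ d`. Over `ℂ` this polynomial is a product of factors `X - α` with `‖α‖ ≤ ρ`. Removing one
factor, `w k = y (k + 1) - α y k` satisfies the shorter recurrence, so by induction `w k / r ^ k → 0`;
then `y (k + 1) / r ^ (k + 1) = (α / r) (y k / r ^ k) + w k / r ^ (k + 1)` is a perturbed contraction
because `‖α‖ < r`, and `y k / r ^ k → 0` as well.
-/

open Polynomial Filter Topology

theorem tendsto_zero_of_le_mul_add {a : ℝ} (ha0 : 0 ≤ a) (ha1 : a < 1) {u v : ℕ → ℝ}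
    (hu : ∀ k, 0 ≤ u k) (h : ∀ k, u (k + 1) ≤ a * u k + v k)
    (hv : Tendsto v atTop (𝓝 0)) : Tendsto u atTop (𝓝 0) := by
  refine tendsto_order.2 ⟨fun c hc => .of_forall fun k => hc.trans_le (hu k), fun ε hε => ?_⟩
  obtain ⟨K, hK⟩ := eventually_atTop.1
    (hv.eventually (eventually_le_nhds (by positivity : (0 : ℝ) < (1 - a) * (ε / 2))))
  -- beyond `K`, the excess of `u` over `ε / 2` contracts by the factor `a`
  have hgeom : ∀ j, u (K + j) - ε / 2 ≤ a ^ j * (u K - ε / 2) := by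
    intro j
    induction j with
    | zero => simp
    | succ j ih =>
      calc u (K + j + 1) - ε / 2 ≤ a * (u (K + j) - ε / 2) := by
            linarith [h (K + j), hK (K + j) (Nat.le_add_right K j)]
        _ ≤ a ^ (j + 1) * (u K - ε / 2) := by
            rw [pow_succ', mul_assoc]; exact mul_le_mul_of_nonneg_left ih ha0
  have hpow : Tendsto (fun j => a ^ j * (u K - ε / 2)) atTop (𝓝 0) := by
    simpa using (tendsto_pow_atTop_nhds_zero_of_lt_one ha0 ha1).mul_const (u K - ε / 2)
  obtain ⟨J, hJ⟩ := eventually_atTop.1 (hpow.eventually (gt_mem_nhds (half_pos hε)))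
  refine eventually_atTop.2 ⟨K + J, fun k hk => ?_⟩
  obtain ⟨j, rfl⟩ := Nat.exists_eq_add_of_le (le_of_add_le_left hk)
  linarith [hgeom j, hJ j (by omega)]

section SeqShift

variable (R M : Type*) [CommSemiring R] [AddCommMonoid M] [Module R M]

/-- The shift `(y₀, y₁, …) ↦ (y₁, y₂, …)`; a sequence satisfies the linear recurrence with
characteristic polynomial `q` iff `aeval (seqShift R M) q` kills it. -/
def seqShift : Module.End R (ℕ → M) := LinearMap.funLeft R M (· + 1)

variable {R M}

theorem seqShift_pow_apply (i : ℕ) (y : ℕ → M) (k : ℕ) : (seqShift R M ^ i) y k = y (k + i) := by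
  induction i generalizing y with
  | zero => rfl
  | succ i ih => rw [pow_succ, Module.End.mul_apply, ih]; rfl

theorem aeval_seqShift_apply {q : R[X]} {N : ℕ} (hq : q.natDegree < N) (y : ℕ → M) (k : ℕ) :
    aeval (seqShift R M) q y k = ∑ i ∈ Finset.range N, q.coeff i • y (k + i) := by
  simp [aeval_eq_sum_range' hq, seqShift_pow_apply]

theorem aeval_seqShift_apply_of_degree_lt {q : R[X]} {N : ℕ} (hq : q.degree < N) (y : ℕ → M)
    (k : ℕ) : aeval (seqShift R M) q y k = ∑ i ∈ Finset.range N, q.coeff i • y (k + i) := by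
  rcases eq_or_ne q 0 with rfl | hq0
  · simp
  · exact aeval_seqShift_apply ((natDegree_lt_iff_degree_lt hq0).2 hq) y k

theorem Polynomial.Monic.aeval_seqShift_apply {q : R[X]} (hq : q.Monic) (y : ℕ → M) (k : ℕ) :
    aeval (seqShift R M) q y k =
      y (k + q.natDegree) + ∑ i ∈ Finset.range q.natDegree, q.coeff i • y (k + i) := by
  rw [_root_.aeval_seqShift_apply (Nat.lt_succ_self _), Finset.sum_range_succ, hq.coeff_natDegree,
    one_smul, add_comm]

theorem aeval_seqShift_map_algebraMap {A : Type*} [CommSemiring A] [Algebra R A] (q : R[X])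
    (y : ℕ → R) :
    aeval (seqShift A A) (q.map (algebraMap R A)) (algebraMap R A ∘ y) =
      algebraMap R A ∘ aeval (seqShift R R) q y := by
  funext k
  rw [_root_.aeval_seqShift_apply (Nat.lt_succ_of_le (natDegree_map_le)),
    Function.comp_apply, _root_.aeval_seqShift_apply (Nat.lt_succ_self _)]
  simp

theorem aeval_seqShift_X_sub_C {R M : Type*} [CommRing R] [AddCommGroup M] [Module R M] (α : R)
    (y : ℕ → M) (k : ℕ) : aeval (seqShift R M) (X - C α) y k = y (k + 1) - α • y k := by
  simp [seqShift]

end SeqShift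

section Asymptotics

variable {𝕜 E : Type*} [NormedField 𝕜] [NormedAddCommGroup E] [NormedSpace 𝕜 E]

theorem tendsto_norm_div_pow_of_tendsto_sub_smul {α : 𝕜} {r : ℝ} (hα : ‖α‖ < r) {y : ℕ → E}
    (hw : Tendsto (fun k => ‖y (k + 1) - α • y k‖ / r ^ k) atTop (𝓝 0)) :
    Tendsto (fun k => ‖y k‖ / r ^ k) atTop (𝓝 0) := by
  have hr : 0 < r := (norm_nonneg α).trans_lt hα
  refine tendsto_zero_of_le_mul_add (div_nonneg (norm_nonneg α) hr.le) ((div_lt_one hr).2 hα)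
    (fun k => by positivity) (fun k => ?_) (by simpa using hw.div_const r)
  calc ‖y (k + 1)‖ / r ^ (k + 1) = ‖α • y k + (y (k + 1) - α • y k)‖ / r ^ (k + 1) := by
        rw [add_sub_cancel]
    _ ≤ (‖α‖ * ‖y k‖ + ‖y (k + 1) - α • y k‖) / r ^ (k + 1) := by
        gcongr; exact (norm_add_le _ _).trans_eq (by rw [norm_smul])
    _ = ‖α‖ / r * (‖y k‖ / r ^ k) + ‖y (k + 1) - α • y k‖ / r ^ k / r := by
        field_simp; ring

theorem tendsto_norm_div_pow_of_aeval_seqShift_prod_eq_zero {c : 𝕜} (hc : c ≠ 0) {r : ℝ}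
    {s : Multiset 𝕜} (hs : ∀ a ∈ s, ‖a‖ < r) {y : ℕ → E}
    (hy : aeval (seqShift 𝕜 E) (C c * (s.map fun a => X - C a).prod) y = 0) :
    Tendsto (fun k => ‖y k‖ / r ^ k) atTop (𝓝 0) := by
  induction s using Multiset.induction_on generalizing y with
  | empty =>
    have : y = 0 := by simpa [hc] using hy
    simp [this]
  | cons a s ih =>
    refine tendsto_norm_div_pow_of_tendsto_sub_smul (hs a (Multiset.mem_cons_self a s)) ?_
    simp_rw [← aeval_seqShift_X_sub_C]
    refine ih (fun b hb => hs b (Multiset.mem_cons_of_mem hb)) ?_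
    rw [← Module.End.mul_apply, ← map_mul]
    convert hy using 3
    simp only [Multiset.map_cons, Multiset.prod_cons]
    ring

theorem tendsto_norm_div_pow_of_aeval_seqShift_eq_zero [IsAlgClosed 𝕜] {q : 𝕜[X]} (hq : q ≠ 0)
    {r : ℝ} (hroots : ∀ a ∈ q.roots, ‖a‖ < r) {y : ℕ → E} (hy : aeval (seqShift 𝕜 E) q y = 0) :
    Tendsto (fun k => ‖y k‖ / r ^ k) atTop (𝓝 0) := by
  rw [← C_leadingCoeff_mul_prod_multiset_X_sub_C (p := q) IsAlgClosed.card_roots_eq_natDegree] at hy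
  exact tendsto_norm_div_pow_of_aeval_seqShift_prod_eq_zero (leadingCoeff_ne_zero.2 hq) hroots hy

end Asymptotics

theorem aeval_seqShift_sub_C_mul_eq_zero {K M : Type*} [Field K] [AddCommGroup M] [Module K M]
    {m d : K[X]} {lam : K} (hlam : lam ≠ 0) {b x : ℕ → M}
    (hb : aeval (seqShift K M) m b = 0)
    (hx : aeval (seqShift K M) m x = aeval (seqShift K M) d (lam • x + b)) :
    aeval (seqShift K M) (m - C lam * d) (x + lam⁻¹ • b) = 0 := by
  simp only [map_sub, map_mul, aeval_C, Algebra.algebraMap_eq_smul_one, smul_mul_assoc, one_mul,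
    LinearMap.sub_apply, LinearMap.smul_apply, map_add, map_smul, hb, hx]
  rw [zero_sub, smul_neg, inv_smul_smul₀ hlam]
  abel

theorem scalar_tracking_general
    (μ L : ℝ) (hμ : 0 < μ)
    (lam : ℝ) (hlam : lam ∈ Set.Icc μ L)
    (n : ℕ)
    (m : Polynomial ℝ) (hm : m.Monic) (hmdeg : m.natDegree = n)
    (d : Polynomial ℝ) (hd : d.degree < (n : WithBot ℕ))
    (b x : ℕ → ℝ)
    (hb : ∀ k : ℕ, b (k + n) + ∑ i ∈ Finset.range n, m.coeff i * b (k + i) = 0)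
    (hx : ∀ k : ℕ, x (k + n) + ∑ i ∈ Finset.range n, m.coeff i * x (k + i) =
      ∑ i ∈ Finset.range n, d.coeff i * (lam * x (k + i) + b (k + i)))
    (ρ : ℝ) (hρ : ρ ∈ Set.Ioo (0 : ℝ) 1)
    (hroots : ∀ z : ℂ, ((m - C lam * d).map (algebraMap ℝ ℂ)).IsRoot z →
      ‖z‖ ≤ ρ) :
    (∀ r : ℝ, ρ < r →
      Tendsto (fun k : ℕ => (x k + b k / lam) / r ^ k) atTop (nhds 0)) ∧
    Tendsto (fun k : ℕ => x k - (-(b k) / lam)) atTop (nhds 0) := by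
  have hlam0 : lam ≠ 0 := (hμ.trans_le hlam.1).ne'
  have hp : (m - C lam * d).Monic := hm.sub_of_left <| by
    rwa [degree_eq_natDegree hm.ne_zero, hmdeg, degree_C_mul hlam0]
  have hmb : aeval (seqShift ℝ ℝ) m b = 0 := funext fun k => by
    simpa [hm.aeval_seqShift_apply, hmdeg] using hb k
  have hmx : aeval (seqShift ℝ ℝ) m x = aeval (seqShift ℝ ℝ) d (lam • x + b) := funext fun k => by
    simpa [hm.aeval_seqShift_apply, aeval_seqShift_apply_of_degree_lt hd, hmdeg] using hx k
  have hy : aeval (seqShift ℂ ℂ) ((m - C lam * d).map (algebraMap ℝ ℂ))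
      (algebraMap ℝ ℂ ∘ (x + lam⁻¹ • b)) = 0 := by
    rw [aeval_seqShift_map_algebraMap, aeval_seqShift_sub_C_mul_eq_zero hlam0 hmb hmx]
    exact funext fun k => map_zero _
  have hmain : ∀ r : ℝ, ρ < r → Tendsto (fun k => (x k + b k / lam) / r ^ k) atTop (nhds 0) := by
    intro r hr
    have hr0 : 0 < r := hρ.1.trans hr
    refine tendsto_zero_iff_norm_tendsto_zero.2 ?_
    convert tendsto_norm_div_pow_of_aeval_seqShift_eq_zero (map_ne_zero hp.ne_zero)
      (fun a ha => (hroots a (isRoot_of_mem_roots ha)).trans_lt hr) hy using 2 with k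
    simp only [Real.norm_eq_abs, abs_div, abs_pow, abs_of_pos hr0, Function.comp_apply,
      Complex.coe_algebraMap, Complex.norm_real, Pi.add_apply, Pi.smul_apply, smul_eq_mul,
      inv_mul_eq_div]
  exact ⟨hmain, by simpa [neg_div] using hmain 1 hρ.2⟩

/-- **Scalar (eigenvector-coordinate) tracking lemma.**
Let `0 < μ < L`, `λ ∈ [μ, L]`, `m` a monic real polynomial of degree `n ≥ 1`,
`d` a real polynomial of degree `< n`. Suppose `b` satisfies the model
recurrence `b_{k+n} + Σ m_i b_{k+i} = 0` and `x` satisfies the algorithm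
recurrence `x_{k+n} + Σ m_i x_{k+i} = Σ d_i (λ x_{k+i} + b_{k+i})`. If
`ρ ∈ (0,1)` is such that every complex root of `m - λ·d` has modulus at most
`ρ`, then `(x_k + b_k/λ)/r^k → 0` for every `r > ρ`; in particular
`x_k - x*_k → 0` with `x*_k = -b_k/λ`. -/
theorem scalar_tracking
    (μ L : ℝ) (hμ : 0 < μ) (hμL : μ < L)
    (lam : ℝ) (hlam : lam ∈ Set.Icc μ L)
    (n : ℕ) (hn : 1 ≤ n)
    (m : Polynomial ℝ) (hm : m.Monic) (hmdeg : m.natDegree = n)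
    (d : Polynomial ℝ) (hd : d.degree < (n : WithBot ℕ))
    (b x : ℕ → ℝ)
    (hb : ∀ k : ℕ, b (k + n) + ∑ i ∈ Finset.range n, m.coeff i * b (k + i) = 0)
    (hx : ∀ k : ℕ, x (k + n) + ∑ i ∈ Finset.range n, m.coeff i * x (k + i) =
      ∑ i ∈ Finset.range n, d.coeff i * (lam * x (k + i) + b (k + i)))
    (ρ : ℝ) (hρ : ρ ∈ Set.Ioo (0 : ℝ) 1)
    (hroots : ∀ z : ℂ, ((m - C lam * d).map (algebraMap ℝ ℂ)).IsRoot z →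
      ‖z‖ ≤ ρ) :
    (∀ r : ℝ, ρ < r →
      Tendsto (fun k : ℕ => (x k + b k / lam) / r ^ k) atTop (nhds 0)) ∧
    Tendsto (fun k : ℕ => x k - (-(b k) / lam)) atTop (nhds 0) :=
  scalar_tracking_general μ L hμ lam hlam n m hm hmdeg d hd b x hb hx ρ hρ hroots
end

section
/- Let 0 < μ < L be reals, let θ ∈ ℝ, and set ρ = √((L − μ)/(L + μ)), c₁ = −2cos(θ)/L, c₂ = −2/(L + μ). Then for every λ ∈ [μ, L], every complex root z of the polynomial z² − 2cos(θ)z + 1 − λ(c₁z − c₂) satisfies |z| ≤ ρ. Moreover, for λ = L this polynomial equals z² − (L − μ)/(L + μ), so its roots are exactly ±ρ. -/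
/-!
A real quadratic `z² - b z + c` has all its complex roots in the closed disk of radius `r > 0` as
soon as `c ≤ r²` and `|b| r ≤ r² + c`: a conjugate pair has squared modulus `c`, while real roots
are trapped in `[-r, r]` because the quadratic is nonnegative at `±r` and its vertex `b / 2` lies
in between (`|b| ≤ 2r`). The closed-loop polynomial at `λ` has `b = 2 cos θ (L - λ) / L` and
`c = (L + μ - 2λ) / (L + μ)`, so the first condition is `μ ≤ λ`, and the second follows from
`|cos θ| ≤ 1` and `ρ ≤ L / (L + μ)`, i.e. `(L - μ)(L + μ) ≤ L²`. At `λ = L` both `b = 0` and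
`c = -ρ²`.
-/

open Polynomial

theorem abs_le_of_sq_sub_mul_add_eq_zero {b c r x : ℝ} (hr : 0 < r) (hc : c ≤ r ^ 2)
    (hb : |b| * r ≤ r ^ 2 + c) (hx : x ^ 2 - b * x + c = 0) : |x| ≤ r := by
  have hb2 : |b| ≤ 2 * r := by nlinarith
  by_contra! hxr
  have hpos : 0 < (|x| - r) * (|x| + r - |b|) := mul_pos (by linarith) (by linarith)
  nlinarith [sq_abs x, le_abs_self (b * x), abs_mul b x]

theorem Complex.norm_le_of_sq_sub_mul_add_eq_zero {b c r : ℝ} (hr : 0 < r) (hc : c ≤ r ^ 2)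
    (hb : |b| * r ≤ r ^ 2 + c) {z : ℂ} (hz : z ^ 2 - b * z + c = 0) : ‖z‖ ≤ r := by
  have hre : z.re ^ 2 - z.im ^ 2 - b * z.re + c = 0 := by
    simpa [sq] using congrArg Complex.re hz
  have him : (2 * z.re - b) * z.im = 0 := by
    have h := congrArg Complex.im hz
    simp only [sq, sub_im, add_im, mul_im, ofReal_re, ofReal_im, zero_im] at h
    linear_combination h
  rcases mul_eq_zero.mp him with hconj | hreal
  · have hnorm : ‖z‖ ^ 2 = c := by
      rw [Complex.sq_norm, Complex.normSq_apply]
      linear_combination -hre + z.re * hconj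
    nlinarith [norm_nonneg z]
  · rw [← Complex.re_add_im z, hreal, ofReal_zero, zero_mul, add_zero, norm_real,
      Real.norm_eq_abs]
    refine abs_le_of_sq_sub_mul_add_eq_zero hr hc hb ?_
    rw [hreal] at hre
    linear_combination hre

theorem closedLoop_eq_quadratic {R : Type*} [CommRing R] (a c₁ c₂ lam : R) :
    (X ^ 2 - C a * X + C 1) - C lam * (C c₁ * X - C c₂)
      = X ^ 2 - C (a + lam * c₁) * X + C (1 + lam * c₂) := by
  simp only [C_add, C_mul]
  ring

theorem isRoot_map_quadratic_iff (b c : ℝ) (z : ℂ) :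
    ((X ^ 2 - C b * X + C c).map (algebraMap ℝ ℂ)).IsRoot z ↔ z ^ 2 - b * z + c = 0 := by
  simp

section Design

variable {μ L lam : ℝ}

theorem sqrt_sub_div_add_le_div (hμ : 0 ≤ μ) (hL : 0 < L) :
    √((L - μ) / (L + μ)) ≤ L / (L + μ) := by
  rw [Real.sqrt_le_left (by positivity), div_pow, div_le_div_iff₀ (by positivity) (by positivity)]
  nlinarith [mul_nonneg (mul_nonneg hμ hμ) (add_pos_of_pos_of_nonneg hL hμ).le]

theorem one_add_mul_neg_two_div_le (hLμ : 0 < L + μ) (hlam : μ ≤ lam) :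
    1 + lam * (-2 / (L + μ)) ≤ (L - μ) / (L + μ) := by
  rw [le_div_iff₀ hLμ]
  field_simp
  linarith

theorem abs_two_cos_add_mul_le (hL : 0 < L) (hlam : lam ≤ L) (θ : ℝ) :
    |2 * Real.cos θ + lam * (-2 * Real.cos θ / L)| ≤ 2 * (L - lam) / L := by
  have hfactor :
      2 * Real.cos θ + lam * (-2 * Real.cos θ / L) = 2 * (L - lam) / L * Real.cos θ := by
    field_simp
    ring
  have hnonneg : 0 ≤ 2 * (L - lam) / L := div_nonneg (by linarith) hL.le
  rw [hfactor, abs_mul, abs_of_nonneg hnonneg]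
  exact mul_le_of_le_one_right hnonneg (Real.abs_cos_le_one θ)

theorem norm_le_of_closedLoop_eq_zero (hμ : 0 < μ) (hμL : μ < L) (hlam : lam ∈ Set.Icc μ L)
    (θ : ℝ) {z : ℂ}
    (hz : z ^ 2 - (2 * Real.cos θ + lam * (-2 * Real.cos θ / L) : ℝ) * z
      + (1 + lam * (-2 / (L + μ)) : ℝ) = 0) :
    ‖z‖ ≤ √((L - μ) / (L + μ)) := by
  have hL : 0 < L := hμ.trans hμL
  have hLμ : 0 < L + μ := by linarith
  have hρ_sq : √((L - μ) / (L + μ)) ^ 2 = (L - μ) / (L + μ) :=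
    Real.sq_sqrt (div_nonneg (by linarith) hLμ.le)
  refine Complex.norm_le_of_sq_sub_mul_add_eq_zero
    (Real.sqrt_pos.2 (div_pos (by linarith) hLμ)) ?_ ?_ hz
  · rw [hρ_sq]
    exact one_add_mul_neg_two_div_le hLμ hlam.1
  · calc |2 * Real.cos θ + lam * (-2 * Real.cos θ / L)| * √((L - μ) / (L + μ))
        ≤ 2 * (L - lam) / L * (L / (L + μ)) :=
          mul_le_mul (abs_two_cos_add_mul_le hL hlam.2 θ) (sqrt_sub_div_add_le_div hμ.le hL)
            (Real.sqrt_nonneg _) (div_nonneg (by linarith [hlam.2]) hL.le)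
      _ = √((L - μ) / (L + μ)) ^ 2 + (1 + lam * (-2 / (L + μ))) := by
          rw [hρ_sq]
          field_simp
          ring

end Design

/-- **n = 2 controller design for a complex-conjugate pair of unit-circle poles.**
For the model `m(z) = z² - 2cos(θ)z + 1` and the filter numerator
`d(z) = c₁z - c₂` with `c₁ = -2cos(θ)/L`, `c₂ = -2/(L+μ)`, every complex root of
`m(z) - λ·d(z)` has modulus at most `ρ = √((L-μ)/(L+μ))` for all `λ ∈ [μ, L]`;
moreover at `λ = L` the closed-loop polynomial equals `z² - (L-μ)/(L+μ)`, whose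
roots are exactly `±ρ`. -/
theorem n2_complex_pair_design
    (μ L : ℝ) (hμ : 0 < μ) (hμL : μ < L) (θ : ℝ)
    (ρ : ℝ) (hρ : ρ = Real.sqrt ((L - μ) / (L + μ)))
    (c₁ c₂ : ℝ) (hc₁ : c₁ = -2 * Real.cos θ / L) (hc₂ : c₂ = -2 / (L + μ)) :
    (∀ lam ∈ Set.Icc μ L, ∀ z : ℂ,
      (((X ^ 2 - C (2 * Real.cos θ) * X + C 1) - C lam * (C c₁ * X - C c₂)).map
        (algebraMap ℝ ℂ)).IsRoot z → ‖z‖ ≤ ρ) ∧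
    ((X ^ 2 - C (2 * Real.cos θ) * X + C 1) - C L * (C c₁ * X - C c₂)
      = X ^ 2 - C ((L - μ) / (L + μ))) ∧
    (∀ z : ℂ,
      (((X ^ 2 - C (2 * Real.cos θ) * X + C 1) - C L * (C c₁ * X - C c₂)).map
        (algebraMap ℝ ℂ)).IsRoot z ↔ z = (ρ : ℂ) ∨ z = -(ρ : ℂ)) := by
  subst hρ hc₁ hc₂
  have hL : 0 < L := hμ.trans hμL
  have hLμ : 0 < L + μ := by linarith
  have hpoly_L : (X ^ 2 - C (2 * Real.cos θ) * X + C 1)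
      - C L * (C (-2 * Real.cos θ / L) * X - C (-2 / (L + μ)))
      = X ^ 2 - C ((L - μ) / (L + μ)) := by
    have hb : 2 * Real.cos θ + L * (-2 * Real.cos θ / L) = 0 := by
      field_simp
      ring
    have hc : 1 + L * (-2 / (L + μ)) = -((L - μ) / (L + μ)) := by
      field_simp
      ring
    rw [closedLoop_eq_quadratic, hb, hc, C_0, C_neg]
    ring
  refine ⟨fun lam hlam z hz => ?_, hpoly_L, fun z => ?_⟩
  · rw [closedLoop_eq_quadratic, isRoot_map_quadratic_iff] at hz
    exact norm_le_of_closedLoop_eq_zero hμ hμL hlam θ hz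
  · have hρ_sq : (√((L - μ) / (L + μ)) : ℂ) ^ 2 = ((L - μ) / (L + μ) : ℝ) := by
      rw [← Complex.ofReal_pow, Real.sq_sqrt (div_nonneg (by linarith) hLμ.le)]
    rw [hpoly_L, ← sq_eq_sq_iff_eq_or_eq_neg, hρ_sq]
    simp [sub_eq_zero]
end

section
/- Let 0 < μ < L be reals and set ρ = √((L − μ)/(L + μ)). Then for every λ ∈ [μ, L], every complex root z of the polynomial z² − 1 + 2λ/(L + μ) satisfies |z| ≤ ρ. Moreover, for λ = μ the polynomial equals z² − ρ² (roots ±ρ), and for λ = L it equals z² + ρ² (roots ±iρ). -/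
/-!
Both roots of `z² - c` have modulus `√|c|`, and here `c = 1 - 2λ/(L+μ) = (L + μ - 2λ)/(L+μ)`.
Its numerator moves linearly from `L - μ` at `λ = μ` to `-(L - μ)` at `λ = L`, so `|c| ≤ ρ²`
on the whole interval, with equality exactly at the two endpoints.
-/

open Polynomial

theorem Polynomial.X_sq_sub_C_one_add_C {R : Type*} [CommRing R] (a : R) :
    (X ^ 2 - C 1 + C a : R[X]) = X ^ 2 - C (1 - a) := by
  rw [C_sub]; ring

theorem Polynomial.isRoot_map_X_sq_sub_C {R S : Type*} [CommRing R] [CommRing S]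
    (f : R →+* S) (c : R) (z : S) :
    ((X ^ 2 - C c : R[X]).map f).IsRoot z ↔ z ^ 2 = f c := by
  simp [sub_eq_zero]

section

variable {μ L : ℝ}

theorem one_sub_two_mul_div_add_left (h : L + μ ≠ 0) :
    1 - 2 * μ / (L + μ) = (L - μ) / (L + μ) := by
  field_simp; ring

theorem one_sub_two_mul_div_add_right (h : L + μ ≠ 0) :
    1 - 2 * L / (L + μ) = -((L - μ) / (L + μ)) := by
  field_simp; ring

theorem abs_one_sub_two_mul_div_add_le (h : 0 < L + μ) {lam : ℝ} (hlam : lam ∈ Set.Icc μ L) :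
    |1 - 2 * lam / (L + μ)| ≤ (L - μ) / (L + μ) := by
  rw [show 1 - 2 * lam / (L + μ) = (L + μ - 2 * lam) / (L + μ) by field_simp, abs_div,
    abs_of_pos h, div_le_div_iff_of_pos_right h, abs_le]
  constructor <;> linarith [hlam.1, hlam.2]

end

/-- **n = 2 controller design for real unit-circle poles at ±1 (model m(z) = z² - 1).**
With the filter numerator `d(z) = -2/(L+μ)` (i.e. `c₁ = 0`, `c₂ = 2/(L+μ)`), the
closed-loop polynomial is `z² - 1 + 2λ/(L+μ)`; every complex root has modulus at
most `ρ = √((L-μ)/(L+μ))` for all `λ ∈ [μ, L]`; at `λ = μ` it equals `z² - ρ²`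
(roots `±ρ`) and at `λ = L` it equals `z² + ρ²` (roots `±iρ`). -/
theorem n2_real_poles_design
    (μ L : ℝ) (hμ : 0 < μ) (hμL : μ < L)
    (ρ : ℝ) (hρ : ρ = Real.sqrt ((L - μ) / (L + μ))) :
    (∀ lam ∈ Set.Icc μ L, ∀ z : ℂ,
      ((X ^ 2 - C 1 + C (2 * lam / (L + μ)) : Polynomial ℝ).map
        (algebraMap ℝ ℂ)).IsRoot z → ‖z‖ ≤ ρ) ∧
    ((X ^ 2 - C 1 + C (2 * μ / (L + μ)) : Polynomial ℝ) = X ^ 2 - C (ρ ^ 2)) ∧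
    (∀ z : ℂ,
      ((X ^ 2 - C 1 + C (2 * μ / (L + μ)) : Polynomial ℝ).map
        (algebraMap ℝ ℂ)).IsRoot z ↔ z = (ρ : ℂ) ∨ z = -(ρ : ℂ)) ∧
    ((X ^ 2 - C 1 + C (2 * L / (L + μ)) : Polynomial ℝ) = X ^ 2 + C (ρ ^ 2)) ∧
    (∀ z : ℂ,
      ((X ^ 2 - C 1 + C (2 * L / (L + μ)) : Polynomial ℝ).map
        (algebraMap ℝ ℂ)).IsRoot z ↔
        z = (ρ : ℂ) * Complex.I ∨ z = -((ρ : ℂ) * Complex.I)) := by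
  have hS : 0 < L + μ := by linarith
  have hρ0 : 0 ≤ ρ := hρ ▸ Real.sqrt_nonneg _
  have hρ2 : ρ ^ 2 = (L - μ) / (L + μ) := by
    rw [hρ, Real.sq_sqrt (div_nonneg (by linarith) hS.le)]
  have hpμ : (X ^ 2 - C 1 + C (2 * μ / (L + μ)) : ℝ[X]) = X ^ 2 - C (ρ ^ 2) := by
    rw [X_sq_sub_C_one_add_C, one_sub_two_mul_div_add_left hS.ne', hρ2]
  have hpL : (X ^ 2 - C 1 + C (2 * L / (L + μ)) : ℝ[X]) = X ^ 2 - C (-ρ ^ 2) := by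
    rw [X_sq_sub_C_one_add_C, one_sub_two_mul_div_add_right hS.ne', hρ2]
  refine ⟨?_, hpμ, ?_, by rw [hpL, C_neg, sub_neg_eq_add], ?_⟩
  · rintro lam hlam z hz
    rw [X_sq_sub_C_one_add_C, isRoot_map_X_sq_sub_C] at hz
    have hz2 : ‖z‖ ^ 2 ≤ ρ ^ 2 := by
      rw [← norm_pow, hz, Complex.coe_algebraMap, Complex.norm_real, Real.norm_eq_abs, hρ2]
      exact abs_one_sub_two_mul_div_add_le hS hlam
    exact (pow_le_pow_iff_left₀ (norm_nonneg z) hρ0 two_ne_zero).1 hz2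
  · intro z
    rw [hpμ, isRoot_map_X_sq_sub_C, Complex.coe_algebraMap, Complex.ofReal_pow,
      sq_eq_sq_iff_eq_or_eq_neg]
  · intro z
    have hI : (algebraMap ℝ ℂ) (-ρ ^ 2) = ((ρ : ℂ) * Complex.I) ^ 2 := by
      simp [mul_pow]
    rw [hpL, isRoot_map_X_sq_sub_C, hI, sq_eq_sq_iff_eq_or_eq_neg]
end

section
/- Let 0 < μ < L be reals and let θ ∈ (0, π). Consider the monic model m(z) = z² − 2cos(θ)z + 1 ∈ ℝ[z]. Then the infimum, over all real polynomials d of degree at most 1, of the quantity sup_{λ∈[μ,L]} max{|z| : z a complex root of m(z) − λ·d(z)} equals √((L − μ)/(L + μ)); it is attained by d(z) = c₁z − c₂ with c₁ = −2cos(θ)/L and c₂ = −2/(L + μ). -/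
/-!
Every closed-loop polynomial `m - λ d` is a monic real quadratic `z² - b z + c` whose constant
term is `c(λ) = 1 - λ d(0)`. By Vieta the product of its two roots is `c(λ)`, so its root radius
is at least `√|c(λ)|`. Since `c` is affine in `λ`, the values at `λ = μ` and `λ = L` cannot both be
smaller than `(L - μ)/(L + μ)` in absolute value, which gives the lower bound for every `d`.
For the proposed `d`, the Jury conditions `|b| ρ ≤ ρ² + c` and `c ≤ ρ²` hold at every
`λ ∈ [μ, L]` with `ρ = √((L - μ)/(L + μ))`, so all roots lie in the disc of radius `ρ`, and at
`λ = μ` the constant term is exactly `ρ²`.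
-/

open Polynomial Set

noncomputable def rootRadius (p : ℝ[X]) : ℝ :=
  sSup ((fun z : ℂ => ‖z‖) '' p.rootSet ℂ)

noncomputable def monicQuadratic (b c : ℝ) : ℝ[X] :=
  X ^ 2 - C b * X + C c

section RootRadius

variable {p : ℝ[X]}

theorem rootRadius_nonneg (p : ℝ[X]) : 0 ≤ rootRadius p :=
  Real.sSup_nonneg (by rintro _ ⟨z, -, rfl⟩; exact norm_nonneg z)

theorem norm_le_rootRadius {z : ℂ} (hz : z ∈ p.rootSet ℂ) : ‖z‖ ≤ rootRadius p :=
  le_csSup ((p.rootSet_finite ℂ).image _).bddAbove ⟨z, hz, rfl⟩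

theorem rootRadius_le {r : ℝ} (hr : 0 ≤ r) (h : ∀ z ∈ p.rootSet ℂ, ‖z‖ ≤ r) :
    rootRadius p ≤ r :=
  Real.sSup_le (by rintro _ ⟨z, hz, rfl⟩; exact h z hz) hr

end RootRadius

section MonicQuadratic

variable {b c : ℝ} {z : ℂ}

theorem mem_rootSet_monicQuadratic :
    z ∈ (monicQuadratic b c).rootSet ℂ ↔ z ^ 2 - b * z + c = 0 := by
  have hne : monicQuadratic b c ≠ 0 := fun h0 => by
    simpa [monicQuadratic] using congrArg (coeff · 2) h0
  rw [mem_rootSet, and_iff_right hne]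
  simp [monicQuadratic]

theorem monicQuadratic_sub_C_mul (b c lam a₁ a₀ : ℝ) :
    monicQuadratic b c - C lam * (C a₁ * X + C a₀) =
      monicQuadratic (b + lam * a₁) (c - lam * a₀) := by
  simp only [monicQuadratic, map_add, map_sub, map_mul]
  ring

theorem exists_roots_mul_eq (b c : ℝ) :
    ∃ z w : ℂ, z ^ 2 - b * z + c = 0 ∧ w ^ 2 - b * w + c = 0 ∧ z * w = c := by
  obtain ⟨s, hs⟩ := IsAlgClosed.exists_eq_mul_self ((b : ℂ) ^ 2 - 4 * c)
  exact ⟨(b + s) / 2, (b - s) / 2, by linear_combination -hs / 4, by linear_combination -hs / 4,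
    by linear_combination hs / 4⟩

theorem im_eq_zero_or_norm_sq_eq (h : z ^ 2 - b * z + c = 0) :
    (z.im = 0 ∧ z.re ^ 2 - b * z.re + c = 0) ∨ ‖z‖ ^ 2 = c := by
  have hre := congrArg Complex.re h
  have him := congrArg Complex.im h
  simp only [pow_two, Complex.add_re, Complex.sub_re, Complex.mul_re, Complex.ofReal_re,
    Complex.ofReal_im, Complex.zero_re, Complex.add_im, Complex.sub_im, Complex.mul_im,
    Complex.zero_im] at hre him
  by_cases hy : z.im = 0
  · left
    exact ⟨hy, by rw [hy] at hre; linear_combination hre⟩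
  · right
    have hb : b = 2 * z.re := mul_left_cancel₀ hy (by linear_combination -him)
    rw [Complex.sq_norm, Complex.normSq_apply]
    subst hb
    linear_combination -hre

theorem norm_le_abs_add_abs_add_one (h : z ^ 2 - b * z + c = 0) : ‖z‖ ≤ |b| + |c| + 1 := by
  rcases le_or_gt ‖z‖ 1 with h1 | h1
  · linarith [abs_nonneg b, abs_nonneg c]
  have hsq : ‖z‖ ^ 2 ≤ |b| * ‖z‖ + |c| :=
    calc ‖z‖ ^ 2 = ‖(b : ℂ) * z - c‖ := by
          rw [← norm_pow, show z ^ 2 = b * z - c by linear_combination h]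
      _ ≤ ‖(b : ℂ) * z‖ + ‖(c : ℂ)‖ := norm_sub_le _ _
      _ = |b| * ‖z‖ + |c| := by simp
  nlinarith [abs_nonneg b, abs_nonneg c]

theorem abs_le_of_sq_sub_mul_add_eq_zero_s15 {x ρ : ℝ} (h : x ^ 2 - b * x + c = 0)
    (h₁ : |b| * ρ ≤ ρ ^ 2 + c) (h₂ : c ≤ ρ ^ 2) (hρ : 0 < ρ) : |x| ≤ ρ := by
  have hb : |b| ≤ 2 * ρ := le_of_mul_le_mul_right (by linarith) hρ
  rw [abs_le] at hb ⊢
  constructor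
  · by_contra! hx
    nlinarith [mul_pos (by linarith : 0 < -ρ - x) (by linarith : 0 < ρ - x + b),
      neg_le_abs b]
  · by_contra! hx
    nlinarith [mul_pos (by linarith : 0 < x - ρ) (by linarith : 0 < x + ρ - b), le_abs_self b]

theorem abs_le_rootRadius_monicQuadratic_sq (b c : ℝ) :
    |c| ≤ rootRadius (monicQuadratic b c) ^ 2 := by
  obtain ⟨z, w, hz, hw, hzw⟩ := exists_roots_mul_eq b c
  have hz' := norm_le_rootRadius (mem_rootSet_monicQuadratic.mpr hz)
  have hw' := norm_le_rootRadius (mem_rootSet_monicQuadratic.mpr hw)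
  calc |c| = ‖z‖ * ‖w‖ := by rw [← norm_mul, hzw, Complex.norm_real, Real.norm_eq_abs]
    _ ≤ rootRadius (monicQuadratic b c) ^ 2 := by
      rw [sq]; exact mul_le_mul hz' hw' (norm_nonneg w) (rootRadius_nonneg _)

theorem rootRadius_monicQuadratic_le_abs_add_abs_add_one (b c : ℝ) :
    rootRadius (monicQuadratic b c) ≤ |b| + |c| + 1 :=
  rootRadius_le (by positivity) fun _ hz =>
    norm_le_abs_add_abs_add_one (mem_rootSet_monicQuadratic.mp hz)

theorem rootRadius_monicQuadratic_le {ρ : ℝ} (hρ : 0 < ρ) (h₁ : |b| * ρ ≤ ρ ^ 2 + c)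
    (h₂ : c ≤ ρ ^ 2) : rootRadius (monicQuadratic b c) ≤ ρ := by
  refine rootRadius_le hρ.le fun z hz => ?_
  rcases im_eq_zero_or_norm_sq_eq (mem_rootSet_monicQuadratic.mp hz) with ⟨him, hre⟩ | hnorm
  · rw [← Complex.re_add_im z, him, Complex.ofReal_zero, zero_mul, add_zero,
      Complex.norm_real, Real.norm_eq_abs]
    exact abs_le_of_sq_sub_mul_add_eq_zero_s15 hre h₁ h₂ hρ
  · exact (pow_le_pow_iff_left₀ (norm_nonneg z) hρ.le two_ne_zero).mp (hnorm ▸ h₂)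

theorem bddAbove_range_rootRadius_monicQuadratic {s : Set ℝ} (hs : IsCompact s)
    (b c a₁ a₀ : ℝ) :
    BddAbove (range fun lam : s => rootRadius (monicQuadratic (b + lam * a₁) (c - lam * a₀))) := by
  obtain ⟨M, hM⟩ := hs.bddAbove_image
    (f := fun lam : ℝ => |b + lam * a₁| + |c - lam * a₀| + 1) (by fun_prop)
  refine ⟨M, ?_⟩
  rintro _ ⟨lam, rfl⟩
  exact (rootRadius_monicQuadratic_le_abs_add_abs_add_one _ _).trans (hM ⟨lam, lam.2, rfl⟩)

end MonicQuadratic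

section Minimax

variable {μ L : ℝ}

theorem sub_div_add_le_max_abs_one_sub_mul (hμ : 0 ≤ μ) (hL : 0 < L) (a : ℝ) :
    (L - μ) / (L + μ) ≤ max |1 - μ * a| |1 - L * a| := by
  rw [div_le_iff₀ (by linarith)]
  nlinarith [le_max_left |1 - μ * a| |1 - L * a|, le_max_right |1 - μ * a| |1 - L * a|,
    le_abs_self (1 - μ * a), neg_abs_le (1 - L * a)]

theorem sqrt_le_iSup_rootRadius (hμ : 0 < μ) (hμL : μ < L) (b : ℝ) {d : ℝ[X]}
    (hd : d.degree ≤ 1) :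
    √((L - μ) / (L + μ)) ≤ ⨆ lam : Icc μ L, rootRadius (monicQuadratic b 1 - C (lam : ℝ) * d) := by
  rw [eq_X_add_C_of_degree_le_one hd]
  simp only [monicQuadratic_sub_C_mul]
  set r := ⨆ lam : Icc μ L, rootRadius (monicQuadratic (b + lam * d.coeff 1) (1 - lam * d.coeff 0))
  have hbdd := bddAbove_range_rootRadius_monicQuadratic (isCompact_Icc (a := μ) (b := L))
    b 1 (d.coeff 1) (d.coeff 0)
  have hend : ∀ lam ∈ Icc μ L, |1 - lam * d.coeff 0| ≤ r ^ 2 := fun lam hlam =>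
    (abs_le_rootRadius_monicQuadratic_sq _ _).trans <|
      pow_le_pow_left₀ (rootRadius_nonneg _) (le_ciSup hbdd ⟨lam, hlam⟩) 2
  have hr : 0 ≤ r := Real.iSup_nonneg fun _ => rootRadius_nonneg _
  have hsq : (L - μ) / (L + μ) ≤ r ^ 2 :=
    (sub_div_add_le_max_abs_one_sub_mul hμ.le (hμ.trans hμL) _).trans <|
      max_le (hend μ (left_mem_Icc.mpr hμL.le)) (hend L (right_mem_Icc.mpr hμL.le))
  exact (Real.sqrt_le_left hr).mpr hsq

theorem rootRadius_optimal_le_sqrt {β lam : ℝ} (hβ : |β| ≤ 1) (hμ : 0 < μ) (hμL : μ < L)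
    (hlam : lam ∈ Icc μ L) :
    rootRadius (monicQuadratic (2 * β * ((L - lam) / L)) ((L + μ - 2 * lam) / (L + μ))) ≤
      √((L - μ) / (L + μ)) := by
  obtain ⟨hμlam, hlamL⟩ := hlam
  have hL : 0 < L := hμ.trans hμL
  have hLμ : 0 < L + μ := by linarith
  set ρ := √((L - μ) / (L + μ))
  have hρ : 0 < ρ := Real.sqrt_pos.mpr (div_pos (by linarith) hLμ)
  have hρsq : ρ ^ 2 = (L - μ) / (L + μ) := Real.sq_sqrt (div_pos (by linarith) hLμ).le
  -- `ρ (L + μ) ≤ L` is `2ρ ≤ 1 + ρ²` multiplied by `(L + μ)/2`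
  have hρL : |β| * (ρ * (L + μ)) ≤ L := by
    have hρsq' : ρ ^ 2 * (L + μ) = L - μ := by rw [hρsq]; field_simp
    have : ρ * (L + μ) ≤ L := by nlinarith [mul_nonneg hLμ.le (sq_nonneg (ρ - 1))]
    nlinarith [abs_nonneg β, mul_pos hρ hLμ]
  refine rootRadius_monicQuadratic_le hρ ?_ ?_
  · have hlhs : |2 * β * ((L - lam) / L)| * ρ = 2 * (L - lam) * (|β| * ρ) / L := by
      rw [abs_mul, abs_mul, abs_two, abs_of_nonneg (by positivity : 0 ≤ (L - lam) / L)]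
      ring
    have hrhs : ρ ^ 2 + (L + μ - 2 * lam) / (L + μ) = 2 * (L - lam) / (L + μ) := by
      rw [hρsq]; ring
    rw [hlhs, hrhs, div_le_div_iff₀ hL hLμ]
    nlinarith [mul_le_mul_of_nonneg_left hρL (by linarith : 0 ≤ 2 * (L - lam))]
  · rw [hρsq, div_le_div_iff_of_pos_right hLμ]
    linarith

theorem iSup_rootRadius_eq_sqrt {β : ℝ} (hβ : |β| ≤ 1) (hμ : 0 < μ) (hμL : μ < L) :
    ⨆ lam : Icc μ L, rootRadius (monicQuadratic (2 * β) 1 -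
        C (lam : ℝ) * (C (-2 * β / L) * X - C (-2 / (L + μ)))) =
      √((L - μ) / (L + μ)) := by
  have hL : 0 < L := hμ.trans hμL
  have hLμ : 0 < L + μ := by linarith
  have hpoly : ∀ lam : ℝ, monicQuadratic (2 * β) 1 -
      C lam * (C (-2 * β / L) * X - C (-2 / (L + μ))) =
        monicQuadratic (2 * β * ((L - lam) / L)) ((L + μ - 2 * lam) / (L + μ)) := by
    intro lam
    rw [sub_eq_add_neg (C _ * X), ← map_neg C, monicQuadratic_sub_C_mul]
    congr 1 <;> field_simp; ring
  simp only [hpoly]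
  have hupper := fun lam : Icc μ L => rootRadius_optimal_le_sqrt hβ hμ hμL lam.2
  have hattained : √((L - μ) / (L + μ)) ≤
      rootRadius (monicQuadratic (2 * β * ((L - μ) / L)) ((L + μ - 2 * μ) / (L + μ))) := by
    refine (Real.sqrt_le_left (rootRadius_nonneg _)).mpr ?_
    refine le_trans (le_of_eq ?_) (abs_le_rootRadius_monicQuadratic_sq _ _)
    rw [abs_of_pos (by rw [show L + μ - 2 * μ = L - μ by ring]; positivity)]
    ring
  exact le_antisymm (Real.iSup_le hupper (Real.sqrt_nonneg _))
    (le_ciSup_of_le ⟨_, by rintro _ ⟨lam, rfl⟩; exact hupper lam⟩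
      ⟨μ, left_mem_Icc.mpr hμL.le⟩ hattained)

end Minimax

theorem n2_minimax_rate_general
    (μ L : ℝ) (hμ : 0 < μ) (hμL : μ < L)
    (θ : ℝ)
    (m : Polynomial ℝ) (hm : m = X ^ 2 - C (2 * Real.cos θ) * X + C 1)
    (rate : Polynomial ℝ → ℝ)
    (hrate : ∀ d : Polynomial ℝ, rate d =
      ⨆ lam : Set.Icc μ L,
        sSup ((fun z : ℂ => ‖z‖) '' ((m - C (lam : ℝ) * d).rootSet ℂ))) :
    IsLeast (rate '' {d : Polynomial ℝ | d.degree ≤ 1})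
        (Real.sqrt ((L - μ) / (L + μ))) ∧
    rate (C (-2 * Real.cos θ / L) * X - C (-2 / (L + μ)))
      = Real.sqrt ((L - μ) / (L + μ)) := by
  subst hm
  have hopt : rate (C (-2 * Real.cos θ / L) * X - C (-2 / (L + μ))) = √((L - μ) / (L + μ)) :=
    (hrate _).trans (iSup_rootRadius_eq_sqrt (Real.abs_cos_le_one θ) hμ hμL)
  refine ⟨⟨⟨_, by rw [Set.mem_ofPred_eq]; compute_degree, hopt⟩, ?_⟩, hopt⟩
  rintro _ ⟨d, hd, rfl⟩
  exact (sqrt_le_iSup_rootRadius hμ hμL _ hd).trans_eq (hrate d).symm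

/-- **Optimal worst-case rate for the model m(z) = z² - 2cos(θ)z + 1 (n = 2).**
For `0 < μ < L` and `θ ∈ (0, π)`, the infimum, over all real polynomials `d` of
degree at most `1`, of the worst case (over `λ ∈ [μ, L]`) of the largest modulus
of a complex root of `m(z) - λ·d(z)` equals `√((L-μ)/(L+μ))`, and it is attained
by `d(z) = c₁z - c₂` with `c₁ = -2cos(θ)/L` and `c₂ = -2/(L+μ)`. -/
theorem n2_minimax_rate
    (μ L : ℝ) (hμ : 0 < μ) (hμL : μ < L)
    (θ : ℝ) (hθ : θ ∈ Set.Ioo 0 Real.pi)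
    (m : Polynomial ℝ) (hm : m = X ^ 2 - C (2 * Real.cos θ) * X + C 1)
    (rate : Polynomial ℝ → ℝ)
    (hrate : ∀ d : Polynomial ℝ, rate d =
      ⨆ lam : Set.Icc μ L,
        sSup ((fun z : ℂ => ‖z‖) '' ((m - C (lam : ℝ) * d).rootSet ℂ))) :
    IsLeast (rate '' {d : Polynomial ℝ | d.degree ≤ 1})
        (Real.sqrt ((L - μ) / (L + μ))) ∧
    rate (C (-2 * Real.cos θ / L) * X - C (-2 / (L + μ)))
      = Real.sqrt ((L - μ) / (L + μ)) :=
  n2_minimax_rate_general μ L hμ hμL θ m hm rate hrate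
end
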